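/- The sandpile group G(d,h) of the d-regular tree of depth h surjects onto (ℤ/dℤ)^{(d−1)^h}; consequently its rank (minimum number of generators) is at least (d−1)^h. -/

import Mathlib

namespace SandpileTree

/-- Vertices of the rooted `d`-regular tree of depth `h`: a depth `n ≤ h` together with
the path of steps from the root, padded with value `0` beyond the depth.
The step out of the root has `d` choices; each later step has `d - 1` choices. -/
def Vert (d h : ℕ) : Type :=
  {p : Fin (h + 1) × (Fin h → Fin d) //
    (∀ i : Fin h, (p.1 : ℕ) ≤ (i : ℕ) → (p.2 i : ℕ) = 0) ∧
    (∀ i : Fin h, 0 < (i : ℕ) → (i : ℕ) < (p.1 : ℕ) → (p.2 i : ℕ) < d - 1)}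

instance (d h : ℕ) : DecidableEq (Vert d h) := by unfold Vert; infer_instance
instance (d h : ℕ) : Fintype (Vert d h) := by unfold Vert; infer_instance

/-- The depth (distance from the root) of a vertex. -/
def depth {d h : ℕ} (v : Vert d h) : ℕ := (v.1.1 : ℕ)

/-- The root of the tree. -/
def root (d h : ℕ) (hd : 0 < d) : Vert d h :=
  ⟨(0, fun _ => ⟨0, hd⟩), by constructor <;> intro i <;> simp⟩

/-- `IsParent i j` means that `i` is the parent of `j` in the rooted tree. -/
def IsParent {d h : ℕ} (i j : Vert d h) : Prop :=
  depth j = depth i + 1 ∧ ∀ k : Fin h, (k : ℕ) < depth i → j.1.2 k = i.1.2 k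

instance {d h : ℕ} (i j : Vert d h) : Decidable (IsParent i j) := by
  unfold IsParent; infer_instance

/-- The row of the reduced Laplacian of the augmented tree corresponding to vertex `i`:
`δ i = d·x_i − x_{parent i} − ∑_{j child of i} x_j` (no parent term for the root, and
no children terms for the leaves, which are attached to the sink by `d-1` edges). -/
def delta (d h : ℕ) (i : Vert d h) : Vert d h → ℤ :=
  (d : ℤ) • Pi.single i 1
    - ∑ j ∈ Finset.univ.filter (fun j => IsParent j i), Pi.single j 1
    - ∑ j ∈ Finset.univ.filter (fun j => IsParent i j), Pi.single j 1

/-- The lattice `Λ ⊆ ℤ^V` spanned by the rows of the reduced Laplacian. -/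
def lat (d h : ℕ) : AddSubgroup (Vert d h → ℤ) :=
  AddSubgroup.closure (Set.range (delta d h))

/-- The sandpile group `G(d,h) = ℤ^V / Λ` of the `d`-regular tree of depth `h`. -/
abbrev SG (d h : ℕ) : Type := (Vert d h → ℤ) ⧸ lat d h

/-- The image `x̄ᵢ` of the standard basis vector `xᵢ` in the sandpile group. -/
def xbar (d h : ℕ) (i : Vert d h) : SG d h :=
  QuotientAddGroup.mk (Pi.single i 1)

/-- `θ(d,n) = ((d-1)^n - 1)/(d-2)`. -/
def theta (d n : ℕ) : ℕ := ((d - 1) ^ n - 1) / (d - 2)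

end SandpileTree

/-!
Modulo `d` the diagonal of the reduced Laplacian vanishes, so a vector `w : V → ℤ/d` kills every
row `δᵢ` exactly when the neighbour sums of `w` vanish at every vertex. Such a `w` may be
prescribed arbitrarily on the vertices at the depth parity of the leaves that are not last
children: it is zero at the other parity, and at a last child it is forced by the equation at
its parent. An explicit encoding of strings shows there are at least `(d - 1) ^ h` of these free
vertices, and the resulting vectors, dual to them, define the surjection
`G(d,h) → (ℤ/d)^((d-1)^h)`. Reducing further modulo a prime `p ∣ d`, any generating set of
`G(d,h)` maps onto a spanning set of `𝔽_p^((d-1)^h)`, which bounds its size from below.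
-/

open Matrix

theorem Module.finrank_le_card_of_addSubgroupClosure_eq_top {K V : Type*} [DivisionRing K]
    [AddCommGroup V] [Module K V] {T : Finset V}
    (hT : AddSubgroup.closure (T : Set V) = ⊤) : Module.finrank K V ≤ T.card := by
  have hspan : Submodule.span K (T : Set V) = ⊤ := by
    refine Submodule.toAddSubgroup_injective (top_le_iff.mp ?_)
    rw [← hT, AddSubgroup.closure_le]
    exact Submodule.subset_span
  have := finrank_span_finset_le_card (R := K) T
  rwa [Set.finrank, hspan, finrank_top] at this

theorem AddSubgroup.card_le_card_of_surjective_zmod_pi {G ι : Type*} [AddGroup G] [Fintype ι]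
    {n : ℕ} (hn : n ≠ 1) {f : G →+ (ι → ZMod n)} (hf : Function.Surjective f) {S : Finset G}
    (hS : AddSubgroup.closure (S : Set G) = ⊤) : Fintype.card ι ≤ S.card := by
  classical
  have : Fact n.minFac.Prime := ⟨Nat.minFac_prime hn⟩
  let reduce : (ι → ZMod n) →+ (ι → ZMod n.minFac) :=
    (ZMod.castHom (Nat.minFac_dvd n) (ZMod n.minFac)).toAddMonoidHom.compLeft ι
  have hreduce : Function.Surjective reduce :=
    (ZMod.ringHom_surjective (ZMod.castHom (Nat.minFac_dvd n) (ZMod n.minFac))).comp_left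
  let g := reduce.comp f
  have hT : AddSubgroup.closure ((S.image g : Finset _) : Set (ι → ZMod n.minFac)) = ⊤ := by
    rw [Finset.coe_image, ← AddMonoidHom.map_closure, hS, ← AddMonoidHom.range_eq_map,
      AddMonoidHom.range_eq_top]
    exact hreduce.comp hf
  calc Fintype.card ι = Module.finrank (ZMod n.minFac) (ι → ZMod n.minFac) :=
        (Module.finrank_fintype_fun_eq_card _).symm
    _ ≤ (S.image g).card := Module.finrank_le_card_of_addSubgroupClosure_eq_top hT
    _ ≤ S.card := Finset.card_image_le

theorem exists_surjective_quotient_closure_of_mulVec {V κ ι : Type*} [Fintype V] {n : ℕ}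
    (r : κ → V → ℤ) (W : Matrix ι V (ZMod n))
    (hr : ∀ i, W *ᵥ (fun v => (r i v : ZMod n)) = 0) (hW : Function.Surjective W.mulVec) :
    ∃ f : (V → ℤ) ⧸ AddSubgroup.closure (Set.range r) →+ (ι → ZMod n),
      Function.Surjective f := by
  let φ : (V → ℤ) →+ (ι → ZMod n) :=
    W.mulVecLin.toAddMonoidHom.comp ((Int.castAddHom (ZMod n)).compLeft V)
  have hφ : Function.Surjective φ := hW.comp ZMod.intCast_surjective.comp_left
  have hker : AddSubgroup.closure (Set.range r) ≤ φ.ker := by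
    rw [AddSubgroup.closure_le]
    rintro _ ⟨i, rfl⟩
    exact hr i
  exact ⟨QuotientAddGroup.lift _ φ hker, QuotientAddGroup.lift_surjective_of_surjective _ _ hφ _⟩

namespace SandpileTree

open Finset

variable {d h : ℕ}

def coord (v : Vert d h) (i : ℕ) : ℕ :=
  if hi : i < h then v.1.2 ⟨i, hi⟩ else 0

lemma depth_le (v : Vert d h) : depth v ≤ h := Nat.lt_succ_iff.mp v.1.1.isLt

lemma coord_of_depth_le (v : Vert d h) {i : ℕ} (hi : depth v ≤ i) : coord v i = 0 := by
  unfold coord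
  split_ifs
  exacts [v.2.1 _ hi, rfl]

lemma coord_lt_pred (v : Vert d h) {i : ℕ} (hi₀ : 0 < i) (hi : i < depth v) :
    coord v i < d - 1 := by
  rw [coord, dif_pos (hi.trans_le (depth_le v))]
  exact v.2.2 _ hi₀ hi

lemma coord_zero_lt (v : Vert d h) (hv : 0 < depth v) : coord v 0 < d := by
  rw [coord, dif_pos (hv.trans_le (depth_le v))]
  exact Fin.isLt _

lemma Vert.ext {v w : Vert d h} (hdepth : depth v = depth w)
    (hcoord : ∀ i, coord v i = coord w i) : v = w := by
  refine Subtype.ext (Prod.ext (Fin.ext hdepth) (funext fun i => Fin.ext ?_))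
  simpa [coord, i.isLt] using hcoord i

lemma isParent_iff {i j : Vert d h} :
    IsParent i j ↔ depth j = depth i + 1 ∧ ∀ k < depth i, coord j k = coord i k := by
  refine and_congr_right fun _ => ⟨fun hc k hk => ?_, fun hc k hk => Fin.ext ?_⟩
  · have hkh : k < h := hk.trans_le (depth_le i)
    simp [coord, hkh, hc ⟨k, hkh⟩ hk]
  · simpa [coord, k.isLt] using hc k hk

lemma IsParent.eq_of_coord_eq {i c c' : Vert d h} (hc : IsParent i c) (hc' : IsParent i c')
    (hcoord : coord c (depth i) = coord c' (depth i)) : c = c' := by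
  rw [isParent_iff] at hc hc'
  refine Vert.ext (by omega) fun k => ?_
  rcases lt_trichotomy k (depth i) with hk | rfl | hk
  · rw [hc.2 k hk, hc'.2 k hk]
  · exact hcoord
  · rw [coord_of_depth_le c (by omega), coord_of_depth_le c' (by omega)]

/-- The step taken into the last child of a vertex of depth `n`; the root has `d` children,
every other inner vertex `d - 1`. -/
def lastStep (d n : ℕ) : ℕ := if n = 0 then d - 1 else d - 2

def IsLastChild (v : Vert d h) : Prop :=
  0 < depth v ∧ coord v (depth v - 1) = lastStep d (depth v - 1)

instance (v : Vert d h) : Decidable (IsLastChild v) := by unfold IsLastChild; infer_instance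

def mkVert [NeZero d] (n : ℕ) (hn : n ≤ h) (g : ℕ → ℕ) (hg₀ : 0 < n → g 0 < d)
    (hg : ∀ i, 0 < i → i < n → g i < d - 1) : Vert d h :=
  ⟨(⟨n, by omega⟩, fun i => if hi : (i : ℕ) < n then
      ⟨g i, by
        rcases Nat.eq_zero_or_pos i with hi₀ | hi₀
        · exact hi₀ ▸ hg₀ (by omega)
        · exact (hg i hi₀ hi).trans_le (Nat.sub_le d 1)⟩
    else 0),
    ⟨fun i hi => by simp [show ¬ (i : ℕ) < n by simpa using hi],
     fun i hi₀ hi => by simpa [show (i : ℕ) < n by simpa using hi] using hg i hi₀ hi⟩⟩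

section mkVert

variable [NeZero d] {n : ℕ} {hn : n ≤ h} {g : ℕ → ℕ} {hg₀ : 0 < n → g 0 < d}
  {hg : ∀ i, 0 < i → i < n → g i < d - 1}

@[simp] lemma depth_mkVert : depth (mkVert n hn g hg₀ hg) = n := rfl

lemma coord_mkVert (i : ℕ) : coord (mkVert n hn g hg₀ hg) i = if i < n then g i else 0 := by
  unfold coord mkVert
  by_cases hi : i < n
  · simp [hi, show i < h by omega]
  · by_cases hih : i < h <;> simp [hi, hih]

end mkVert

section Tree

variable [NeZero d]

def parent (v : Vert d h) : Vert d h :=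
  mkVert (depth v - 1) ((Nat.sub_le _ 1).trans (depth_le v)) (coord v)
    (fun hv => coord_zero_lt v (by omega)) (fun _ hi₀ hi => coord_lt_pred v hi₀ (by omega))

@[simp] lemma depth_parent (v : Vert d h) : depth (parent v) = depth v - 1 := rfl

lemma coord_parent (v : Vert d h) (i : ℕ) :
    coord (parent v) i = if i < depth v - 1 then coord v i else 0 :=
  coord_mkVert i

lemma isParent_parent {v : Vert d h} (hv : 0 < depth v) : IsParent (parent v) v :=
  isParent_iff.mpr ⟨by rw [depth_parent]; omega, fun k hk => by simp_all [coord_parent]⟩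

lemma IsParent.eq_parent {i j : Vert d h} (hij : IsParent i j) : i = parent j := by
  obtain ⟨hdepth, hcoord⟩ := isParent_iff.mp hij
  refine Vert.ext (by rw [depth_parent]; omega) fun k => ?_
  rw [coord_parent]
  split_ifs with hk
  · exact (hcoord k (by omega)).symm
  · exact coord_of_depth_le i (by omega)

lemma sum_filter_isParent {M : Type*} [AddCommMonoid M] (f : Vert d h → M) (i : Vert d h) :
    ∑ j ∈ univ.filter (fun j => IsParent j i), f j = if depth i = 0 then 0 else f (parent i) := by
  split_ifs with hi
  · refine sum_eq_zero fun j hj => absurd (mem_filter.mp hj).2.1 (by omega)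
  · convert sum_singleton f (parent i)
    ext j
    simpa using ⟨IsParent.eq_parent, fun hj => hj ▸ isParent_parent (by omega)⟩

def lastChild (hd : 2 ≤ d) (i : Vert d h) (hi : depth i < h) : Vert d h :=
  mkVert (depth i + 1) hi (fun j => if j = depth i then lastStep d j else coord i j)
    (fun _ => by
      split_ifs with h₀
      · unfold lastStep; split_ifs <;> omega
      · exact coord_zero_lt i (by omega))
    (fun j hj₀ hj => by
      split_ifs with hji
      · unfold lastStep; split_ifs <;> omega
      · exact coord_lt_pred i hj₀ (by omega))

section lastChild

variable (hd : 2 ≤ d) {i : Vert d h} (hi : depth i < h)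

@[simp] lemma depth_lastChild : depth (lastChild hd i hi) = depth i + 1 := rfl

lemma coord_lastChild_depth : coord (lastChild hd i hi) (depth i) = lastStep d (depth i) := by
  simp [lastChild, coord_mkVert]

lemma isParent_lastChild : IsParent i (lastChild hd i hi) :=
  isParent_iff.mpr ⟨rfl, fun k hk => by
    simp [lastChild, coord_mkVert, hk.ne, show k < depth i + 1 by omega]⟩

lemma isLastChild_lastChild : IsLastChild (lastChild hd i hi) :=
  ⟨by simp, by simpa using coord_lastChild_depth hd hi⟩

lemma parent_lastChild : parent (lastChild hd i hi) = i :=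
  (isParent_lastChild hd hi).eq_parent.symm

lemma IsParent.eq_lastChild {c : Vert d h} (hc : IsParent i c) (hlast : IsLastChild c) :
    c = lastChild hd i hi := by
  have hdepth : depth c = depth i + 1 := hc.1
  refine hc.eq_of_coord_eq (isParent_lastChild hd hi) ?_
  simpa [coord_lastChild_depth, hdepth] using hlast.2

end lastChild

end Tree

def neighbourSum {M : Type*} [AddCommMonoid M] (w : Vert d h → M) (i : Vert d h) : M :=
  ∑ j ∈ univ.filter (fun j => IsParent j i), w j + ∑ j ∈ univ.filter (fun j => IsParent i j), w j

def IsFree (v : Vert d h) : Prop := depth v % 2 = h % 2 ∧ ¬ IsLastChild v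

section Extension

variable [NeZero d] {R : Type*} [AddCommGroup R]

/-- At a last child `v`, the value that makes the neighbour sum at `parent v` vanish. -/
def extendFree (x : Vert d h → R) (v : Vert d h) : R :=
  if depth v % 2 = h % 2 then
    if IsLastChild v then
      -(if depth (parent v) = 0 then 0 else extendFree x (parent (parent v)))
        - ∑ c ∈ (univ.filter (fun c => IsParent (parent v) c)).erase v, x c
    else x v
  else 0
termination_by depth v
decreasing_by simp only [depth_parent] at *; omega

variable (x : Vert d h → R)

lemma extendFree_of_depth_mod_ne {v : Vert d h} (hv : depth v % 2 ≠ h % 2) :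
    extendFree x v = 0 := by
  rw [extendFree, if_neg hv]

lemma extendFree_of_isFree {v : Vert d h} (hv : IsFree v) : extendFree x v = x v := by
  rw [extendFree, if_pos hv.1, if_neg hv.2]

lemma extendFree_lastChild (hd : 2 ≤ d) {i : Vert d h} (hi : depth i < h)
    (hparity : depth i % 2 ≠ h % 2) :
    extendFree x (lastChild hd i hi) =
      -(if depth i = 0 then 0 else extendFree x (parent i))
        - ∑ c ∈ (univ.filter (fun c => IsParent i c)).erase (lastChild hd i hi), x c := by
  rw [extendFree, if_pos (by rw [depth_lastChild]; omega), if_pos (isLastChild_lastChild hd hi),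
    parent_lastChild]

lemma neighbourSum_extendFree (hd : 2 ≤ d) (i : Vert d h) :
    neighbourSum (extendFree x) i = 0 := by
  by_cases hparity : depth i % 2 = h % 2
  · have hneighbour : ∀ j : Vert d h, depth j = depth i + 1 ∨ depth i = depth j + 1 →
        extendFree x j = 0 :=
      fun j hj => extendFree_of_depth_mod_ne x (by omega)
    rw [neighbourSum, sum_eq_zero fun j hj => hneighbour j (.inr (mem_filter.mp hj).2.1),
      sum_eq_zero fun j hj => hneighbour j (.inl (mem_filter.mp hj).2.1), add_zero]
  · have hi : depth i < h := (depth_le i).lt_of_ne (by omega)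
    set ℓ := lastChild hd i hi
    have hchildren : ∀ c ∈ (univ.filter (fun c => IsParent i c)).erase ℓ,
        extendFree x c = x c := by
      intro c hc
      obtain ⟨hcℓ, hic⟩ : c ≠ ℓ ∧ IsParent i c := by simpa using hc
      refine extendFree_of_isFree x ⟨?_, fun hlast => hcℓ (hic.eq_lastChild hd hi hlast)⟩
      rw [hic.1]; omega
    rw [neighbourSum, sum_filter_isParent,
      ← add_sum_erase _ _ (by simpa using isParent_lastChild hd hi), sum_congr rfl hchildren,
      extendFree_lastChild x hd hi hparity]
    abel

end Extension

def swapSteps (d m : ℕ) (η : ℕ → ℕ) (j : ℕ) : ℕ :=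
  if η (m + 1) = d - 2 then (if j = 0 then d - 1 else if j = m + 1 then η 0 else η j) else η j

section swapSteps

variable {m : ℕ} {η η' : ℕ → ℕ}

lemma swapSteps_zero_lt (hη : ∀ j < m + 2, η j < d - 1) : swapSteps d m η 0 < d := by
  have := hη 0 (by omega)
  unfold swapSteps; split_ifs <;> omega

lemma swapSteps_lt (hη : ∀ j < m + 2, η j < d - 1) {j : ℕ} (hj₀ : 0 < j) (hj : j < m + 2) :
    swapSteps d m η j < d - 1 := by
  have := hη 0 (by omega)
  have := hη j hj
  unfold swapSteps; split_ifs <;> omega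

lemma swapSteps_last_ne (hη : ¬ (η 0 = d - 2 ∧ η (m + 1) = d - 2)) :
    swapSteps d m η (m + 1) ≠ d - 2 := by
  unfold swapSteps
  split_ifs <;> tauto

lemma eq_of_swapSteps_eq (hη : ∀ j < m + 2, η j < d - 1) (hη' : ∀ j < m + 2, η' j < d - 1)
    (hswap : ∀ j < m + 2, swapSteps d m η j = swapSteps d m η' j) :
    ∀ j < m + 2, η j = η' j := by
  have h₀ := hη 0 (by omega)
  have h₀' := hη' 0 (by omega)
  have hfirst := hswap 0 (by omega)
  have hlast := hswap (m + 1) (by omega)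
  simp only [swapSteps, if_true, add_eq_zero, one_ne_zero, and_false, if_false] at hfirst hlast
  intro j hj
  rcases (show j = 0 ∨ j = m + 1 ∨ (j ≠ 0 ∧ j ≠ m + 1) by omega) with rfl | rfl | ⟨hj₀, hjm⟩
  · split_ifs at hfirst hlast <;> omega
  · split_ifs at hfirst hlast <;> omega
  · have := hswap j hj
    simp only [swapSteps, hj₀, hjm, if_false, ite_self] at this
    exact this

end swapSteps

section Encoding

variable [NeZero d]

/-- A string `η` of length `m` with entries `< d - 1` not ending in `d - 2` is the step string
of a free vertex. If it ends, but does not start, with `d - 2`, the first step `d - 1` (never an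
entry of `η`) marks it and `η 0` takes the place of the last entry; if it starts and ends with
`d - 2`, both ends are dropped. -/
def encode : (m : ℕ) → m ≤ h → (η : ℕ → ℕ) → (∀ j < m, η j < d - 1) → Vert d h
  | 0, hm, _, _ => mkVert 0 hm id (by omega) (by omega)
  | 1, hm, η, hη => mkVert 1 hm η (fun _ => (hη 0 one_pos).trans_le (Nat.sub_le d 1)) (by omega)
  | m + 2, hm, η, hη =>
    if η 0 = d - 2 ∧ η (m + 1) = d - 2 then
      encode m (by omega) (fun j => η (j + 1)) (fun j hj => hη (j + 1) (by omega))
    else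
      mkVert (m + 2) hm (swapSteps d m η) (fun _ => swapSteps_zero_lt hη)
        (fun _ hj₀ hj => swapSteps_lt hη hj₀ hj)

theorem depth_encode_le : ∀ (m : ℕ) (hm : m ≤ h) (η : ℕ → ℕ) (hη : ∀ j < m, η j < d - 1),
    depth (encode m hm η hη) ≤ m
  | 0, _, _, _ | 1, _, _, _ => by simp [encode]
  | m + 2, hm, η, hη => by
    rw [encode]
    split_ifs
    · exact (depth_encode_le m _ _ _).trans (by omega)
    · simp

theorem depth_encode_mod : ∀ (m : ℕ) (hm : m ≤ h) (η : ℕ → ℕ) (hη : ∀ j < m, η j < d - 1),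
    depth (encode m hm η hη) % 2 = m % 2
  | 0, _, _, _ | 1, _, _, _ => by simp [encode]
  | m + 2, hm, η, hη => by
    rw [encode]
    split_ifs
    · simp [depth_encode_mod m]
    · simp

theorem not_isLastChild_encode :
    ∀ (m : ℕ) (hm : m ≤ h) (η : ℕ → ℕ) (hη : ∀ j < m, η j < d - 1),
      ¬ IsLastChild (encode m hm η hη)
  | 0, _, _, _ => by simp [encode, IsLastChild]
  | 1, _, η, hη => by
    have := hη 0 one_pos
    simp only [IsLastChild, encode, depth_mkVert, tsub_self, coord_mkVert, lastStep, zero_lt_one,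
      if_true, true_and]
    omega
  | m + 2, hm, η, hη => by
    rw [encode]
    split_ifs with hη₂
    · exact not_isLastChild_encode m _ _ _
    · simpa [IsLastChild, coord_mkVert, lastStep] using swapSteps_last_ne hη₂

theorem eq_of_encode_eq :
    ∀ (m : ℕ) (hm : m ≤ h) (η η' : ℕ → ℕ) (hη : ∀ j < m, η j < d - 1)
      (hη' : ∀ j < m, η' j < d - 1), encode m hm η hη = encode m hm η' hη' →
      ∀ j < m, η j = η' j
  | 0, _, _, _, _, _, _ => by simp
  | 1, _, η, η', _, _, heq => by
    intro j hj
    obtain rfl : j = 0 := by omega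
    simpa [encode, coord_mkVert] using congrArg (coord · 0) heq
  | m + 2, hm, η, η', hη, hη', heq => by
    rw [encode, encode] at heq
    split_ifs at heq with h₁ h₂ h₂
    · have := eq_of_encode_eq m _ _ _ _ _ heq
      intro j hj
      rcases j with _ | j
      · omega
      · by_cases hjm : j < m
        · exact this j hjm
        · obtain rfl : j = m := by omega
          omega
    · have hdepth := congrArg depth heq
      have := depth_encode_le m (by omega : m ≤ h) (fun j => η (j + 1))
        (fun j hj => hη (j + 1) (by omega))
      rw [depth_mkVert] at hdepth
      omega
    · have hdepth := congrArg depth heq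
      have := depth_encode_le m (by omega : m ≤ h) (fun j => η' (j + 1))
        (fun j hj => hη' (j + 1) (by omega))
      rw [depth_mkVert] at hdepth
      omega
    · refine eq_of_swapSteps_eq hη hη' fun j hj => ?_
      simpa [coord_mkVert, hj] using congrArg (coord · j) heq

end Encoding

lemma dotProduct_delta {R : Type*} [CommRing R] (w : Vert d h → R) (i : Vert d h) :
    w ⬝ᵥ (fun v => (delta d h i v : R)) = d * w i - neighbourSum w i := by
  rw [neighbourSum, sum_filter, sum_filter]
  simp [delta, dotProduct, Pi.single_apply, mul_sub, mul_comm, sub_sub, mul_add, sum_add_distrib]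

section FreeFamily

variable [NeZero d]

def freeVert (η : Fin h → Fin (d - 1)) : Vert d h :=
  encode h le_rfl (fun j => if hj : j < h then η ⟨j, hj⟩ else 0) (fun j hj => by simp [hj])

lemma isFree_freeVert (η : Fin h → Fin (d - 1)) : IsFree (freeVert η) :=
  ⟨depth_encode_mod .., not_isLastChild_encode h le_rfl _ _⟩

lemma freeVert_injective : Function.Injective (freeVert (d := d) (h := h)) := fun η η' heq =>
  funext fun j => Fin.ext (by simpa using eq_of_encode_eq h le_rfl _ _ _ _ heq j j.isLt)

end FreeFamily

theorem exists_surjective_of_injective_isFree [NeZero d] (hd : 2 ≤ d) {ι : Type*} [Fintype ι]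
    [DecidableEq ι] {J : ι → Vert d h} (hJ : Function.Injective J) (hfree : ∀ k, IsFree (J k)) :
    ∃ f : SG d h →+ (ι → ZMod d), Function.Surjective f := by
  let W : Matrix ι (Vert d h) (ZMod d) := fun k => extendFree (Pi.single (J k) 1)
  refine exists_surjective_quotient_closure_of_mulVec (delta d h) W (fun i => ?_) ?_
  · ext k
    simp [mulVec, W, dotProduct_delta, neighbourSum_extendFree _ hd]
  · refine mulVec_surjective_iff_exists_right_inverse.mpr
      ⟨Matrix.of fun v k => (Pi.single (J k) 1 : Vert d h → ZMod d) v, ?_⟩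
    ext k k'
    rw [Matrix.mul_apply]
    simp [W, Pi.single_apply, extendFree_of_isFree _ (hfree k'), hJ.eq_iff, one_apply, eq_comm]

end SandpileTree

open SandpileTree

theorem surjects_onto_zmod_power_general (d h : ℕ) (hd : 3 ≤ d) :
    (∃ f : SG d h →+ (Fin ((d - 1) ^ h) → ZMod d), Function.Surjective f) ∧
    (∀ S : Finset (SG d h), AddSubgroup.closure (S : Set (SG d h)) = ⊤ →
      (d - 1) ^ h ≤ S.card) := by
  have : NeZero d := ⟨by omega⟩
  obtain ⟨f, hf⟩ := exists_surjective_of_injective_isFree (by omega : 2 ≤ d)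
    (freeVert_injective.comp finFunctionFinEquiv.symm.injective) fun _ => isFree_freeVert _
  refine ⟨⟨f, hf⟩, fun S hS => ?_⟩
  simpa using AddSubgroup.card_le_card_of_surjective_zmod_pi (by omega : d ≠ 1) hf hS

/-- The sandpile group `G(d,h)` of the `d`-regular tree of depth `h` (`d ≥ 3`, `h ≥ 1`)
surjects onto `(ℤ/dℤ)^{(d−1)^h}`; consequently its rank (the minimum number of
generators) is at least `(d−1)^h`: every generating set has at least `(d−1)^h`
elements. -/
theorem surjects_onto_zmod_power (d h : ℕ) (hd : 3 ≤ d) (hh : 1 ≤ h) :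
    (∃ f : SG d h →+ (Fin ((d - 1) ^ h) → ZMod d), Function.Surjective f) ∧
    (∀ S : Finset (SG d h), AddSubgroup.closure (S : Set (SG d h)) = ⊤ →
      (d - 1) ^ h ≤ S.card) :=
  surjects_onto_zmod_power_general d h hd
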